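/- Let n ∈ ℕ, ε > 0 and let g, h ∈ Homeo_+[0,1]. Suppose F, H ∈ Homeo(K) satisfy π_m ∘ F = ⊕^{p_{n+1}⋯p_m}(g) ∘ π_m and π_m ∘ H = ⊕^{p_{n+1}⋯p_m}(h) ∘ π_m for every m ≥ n (where for m = n the empty product is 1 and ⊕^1(g) = g). If d_sup(g, h) < ε/(p_1⋯p_n), then d(F, H) = sup_{x∈K} d_K(F(x), H(x)) < ε. -/

import Mathlib

open unitInterval

noncomputable section

/-- The group of orientation-preserving homeomorphisms of `[0,1]`:
increasing homeomorphisms of the unit interval. -/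
def OPH : Type := {f : I ≃ₜ I // Monotone f}

/-- `Homeo₊[0,1]` with the supremum metric `d_sup(f,g) = sup_x |f x - g x|`,
obtained by inducing the metric from `C(I,I)` (whose distance is the sup-distance). -/
noncomputable instance : MetricSpace OPH :=
  MetricSpace.induced (fun f => (⟨(f.1 : I → I), f.1.continuous⟩ : C(I, I)))
    (fun f g h => Subtype.ext (Homeomorph.ext fun x => by
      simpa using ContinuousMap.congr_fun h x))
    inferInstance

/-- The identity of `Homeo₊[0,1]`. -/
def OPH.id : OPH := ⟨Homeomorph.refl I, fun _ _ h => h⟩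

/-- `f ↦ f̃` where `f̃ (x) = 1 - f (1 - x)`. -/
def OPH.tilde (f : OPH) : OPH :=
  ⟨symmHomeomorph.trans (f.1.trans symmHomeomorph), by
    intro x y hxy
    have h1 : σ y ≤ σ x := symm_le_symm.mpr hxy
    have h2 : f.1 (σ y) ≤ f.1 (σ x) := f.2 h1
    exact symm_le_symm.mpr h2⟩



/-- The standard degree-`d` tent map, as a function on `ℝ`.  For
`x ∈ [m/d, (m+1)/d]` it equals `d*x - m` if `m` is even and `1 + m - d*x` if `m` is odd. -/
noncomputable def tentFun (d : ℕ) (x : ℝ) : ℝ :=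
  if Even ⌊(d : ℝ) * x⌋ then (d : ℝ) * x - ⌊(d : ℝ) * x⌋ else 1 + ⌊(d : ℝ) * x⌋ - (d : ℝ) * x

/-- The standard degree-`d` tent map `T_d : [0,1] → [0,1]`. -/
noncomputable def tentI (d : ℕ) (x : I) : I :=
  ⟨tentFun d x, by
    have h0 : ((⌊(d : ℝ) * x⌋ : ℤ) : ℝ) ≤ (d : ℝ) * x := Int.floor_le _
    have h1 : ((d : ℝ) * x : ℝ) < ⌊(d : ℝ) * x⌋ + 1 := Int.lt_floor_add_one _
    unfold tentFun
    rw [Set.mem_Icc]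
    split_ifs <;> constructor <;> linarith⟩

/-- The defining property of the homeomorphism `⊕^d(g)` of `[0,1]`:
`G = ⊕^d(g)` iff for every `i < d` and `x ∈ [i/d, (i+1)/d]`,
`G x = (1/d) * g_i (d*x - i) + i/d`, where `g_i = g` for even `i` and `g_i = g̃`
(with `g̃ (x) = 1 - g (1-x)`) for odd `i`. -/
def OplusProp (g : OPH) (d : ℕ) (G : I → I) : Prop :=
  ∀ i : ℕ, i < d → ∀ x : I, (i : ℝ) / d ≤ (x : ℝ) → (x : ℝ) ≤ ((i : ℝ) + 1) / d →
    ∀ hx : (d : ℝ) * (x : ℝ) - (i : ℝ) ∈ unitInterval,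
      (G x : ℝ) =
        (1 / d) * ((if Even i then g.1 else (OPH.tilde g).1) ⟨(d : ℝ) * (x : ℝ) - (i : ℝ), hx⟩ : ℝ)
          + (i : ℝ) / d
/-- The universal Knaster continuum determined by the prime sequence `p`:
`K = {x ∈ [0,1]^ℕ : x_{n-1} = T_{p_n}(x_n) for all n ≥ 1}`, as a subspace of `[0,1]^ℕ`. -/
abbrev Kc (p : ℕ → ℕ) : Type := {x : ℕ → I // ∀ n : ℕ, x n = tentI (p (n + 1)) (x (n + 1))}

/-- The metric `d_K(x,y) = |x₀-y₀|/2 + ∑_{i≥1} |x_i-y_i|/(p₁⋯p_i)` on `K`. -/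
noncomputable def dK (p : ℕ → ℕ) (x y : Kc p) : ℝ :=
  |(x.1 0 : ℝ) - (y.1 0 : ℝ)| / 2 +
    ∑' i : ℕ, |(x.1 (i + 1) : ℝ) - (y.1 (i + 1) : ℝ)| / ∏ j ∈ Finset.Icc 1 (i + 1), (p j : ℝ)

/-- The uniform-convergence distance `d(f,g) = sup_{x ∈ K} d_K(f x, g x)` on `Homeo(K)`. -/
noncomputable def HDist (p : ℕ → ℕ) (f g : Kc p ≃ₜ Kc p) : ℝ :=
  ⨆ x : Kc p, dK p (f x) (g x)

/-- The topology of uniform convergence on `Homeo(K)`: the topology generated by the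
open balls of the metric `d(f,g) = sup_{x ∈ K} d_K(f x, g x)`. -/
noncomputable instance KHomeoTop (p : ℕ → ℕ) : TopologicalSpace (Kc p ≃ₜ Kc p) :=
  TopologicalSpace.generateFrom
    {B | ∃ (f : Kc p ≃ₜ Kc p) (ε : ℝ), 0 < ε ∧ B = {g | HDist p f g < ε}}

/-!
On every coordinate `m ≥ n`, `F` and `H` act by `⊕^d(g)` and `⊕^d(h)` with `d = p_{n+1}⋯p_m`;
these are `d` rescaled copies of `g` or `g̃` (resp. `h` or `h̃`), so they are `d_sup(g,h)/d`-close.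
Since `T_d` is `d`-Lipschitz, the weighted coordinate distance `|x_m - y_m| · p₁⋯p_m` is
nondecreasing in `m` on `K`, so the bound `|F(x)_m - H(x)_m| · p₁⋯p_m ≤ d_sup(g,h) · p₁⋯p_n`
found for `m ≥ n` holds for all `m`. As every `p_i ≥ 2`, the series defining `d_K` is then
dominated by a geometric one summing to at most `d_sup(g,h) · p₁⋯p_n < ε`.
-/

open Finset

namespace OPH

lemma abs_sub_le_dist (g h : OPH) (t : I) : |(g.1 t : ℝ) - h.1 t| ≤ dist g h := by
  have := ContinuousMap.dist_apply_le_dist (f := ⟨(g.1 : I → I), g.1.continuous⟩)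
    (g := ⟨(h.1 : I → I), h.1.continuous⟩) t
  rwa [Subtype.dist_eq, Real.dist_eq] at this

lemma tilde_apply (g : OPH) (t : I) : ((tilde g).1 t : ℝ) = 1 - g.1 (σ t) :=
  coe_symm_eq _

lemma abs_tilde_sub_le_dist (g h : OPH) (t : I) :
    |((tilde g).1 t : ℝ) - (tilde h).1 t| ≤ dist g h := by
  rw [tilde_apply, tilde_apply, sub_sub_sub_cancel_left, abs_sub_comm]
  exact abs_sub_le_dist g h (σ t)

end OPH

lemma exists_nat_lt_le_le_add_one {d : ℕ} (hd : 1 ≤ d) {t : ℝ} (h0 : 0 ≤ t) (htd : t ≤ d) :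
    ∃ i : ℕ, i < d ∧ (i : ℝ) ≤ t ∧ t ≤ i + 1 := by
  rcases htd.lt_or_eq with ht | rfl
  · refine ⟨⌊t⌋₊, ?_, Nat.floor_le h0, (Nat.lt_floor_add_one t).le⟩
    exact_mod_cast (Nat.floor_le h0).trans_lt ht
  · exact ⟨d - 1, by omega, by simp, by simp [Nat.cast_sub hd]⟩

lemma OplusProp.abs_sub_mul_le {g h : OPH} {d : ℕ} (hd : 1 ≤ d) {G H : I → I}
    (hG : OplusProp g d G) (hH : OplusProp h d H) (y : I) :
    |(G y : ℝ) - H y| * d ≤ dist g h := by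
  have hd0 : (0 : ℝ) < d := by exact_mod_cast hd
  obtain ⟨i, hi, hil, hiu⟩ := exists_nat_lt_le_le_add_one hd (mul_nonneg hd0.le y.2.1)
    (mul_le_of_le_one_right hd0.le y.2.2)
  have hlow : (i : ℝ) / d ≤ y := by rw [div_le_iff₀ hd0]; linarith
  have hupp : (y : ℝ) ≤ (i + 1) / d := by rw [le_div_iff₀ hd0]; linarith
  have ht : (d : ℝ) * y - i ∈ I := ⟨by linarith, by linarith⟩
  have hpiece : |((if Even i then g.1 else (OPH.tilde g).1) ⟨_, ht⟩ : ℝ)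
      - (if Even i then h.1 else (OPH.tilde h).1) ⟨_, ht⟩| ≤ dist g h := by
    split_ifs
    · exact OPH.abs_sub_le_dist g h _
    · exact OPH.abs_tilde_sub_le_dist g h _
  rw [hG i hi y hlow hupp ht, hH i hi y hlow hupp ht, add_sub_add_right_eq_sub, ← mul_sub,
    abs_mul, abs_of_pos (one_div_pos.mpr hd0), mul_comm, ← mul_assoc, mul_one_div_cancel hd0.ne',
    one_mul]
  exact hpiece

/-- `T_d x` is the distance from `d x` to the nearest even integer; this is what makes `T_d`
`d`-Lipschitz. -/
lemma tentFun_eq_two_mul_abs_sub_round (d : ℕ) (x : ℝ) :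
    tentFun d x = 2 * |d * x / 2 - round (d * x / 2)| := by
  set t := (d : ℝ) * x
  have hle : (⌊t⌋ : ℝ) ≤ t := Int.floor_le t
  have hlt : t < ⌊t⌋ + 1 := Int.lt_floor_add_one t
  unfold tentFun
  rcases Int.even_or_odd' ⌊t⌋ with ⟨k, hk | hk⟩ <;> rw [hk] at hle hlt ⊢ <;> push_cast at hle hlt
  · have hr : round (t / 2) = k := by
      rw [round_eq, Int.floor_eq_iff]; constructor <;> linarith
    rw [if_pos (even_two_mul k), hr, abs_of_nonneg (by linarith)]
    push_cast; ring
  · have hr : round (t / 2) = k + 1 := by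
      rw [round_eq, Int.floor_eq_iff]; push_cast; constructor <;> linarith
    rw [if_neg (by simp), hr, abs_of_nonpos (by push_cast; linarith)]
    push_cast; ring

lemma abs_abs_sub_round_sub_abs_sub_round_le (u v : ℝ) :
    |(|u - round u| - |v - round v|)| ≤ |u - v| := by
  have key : ∀ a b : ℝ, |a - round a| ≤ |a - b| + |b - round b| := fun a b =>
    (round_le a (round b)).trans (abs_sub_le a b _)
  rw [abs_sub_le_iff]
  constructor
  · linarith [key u v]
  · linarith [key v u, abs_sub_comm u v]

lemma abs_tentI_sub_le (d : ℕ) (a b : I) :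
    |(tentI d a : ℝ) - tentI d b| ≤ d * |(a : ℝ) - b| := by
  change |tentFun d a - tentFun d b| ≤ _
  rw [tentFun_eq_two_mul_abs_sub_round, tentFun_eq_two_mul_abs_sub_round, ← mul_sub, abs_mul,
    abs_two]
  have h := abs_abs_sub_round_sub_abs_sub_round_le (d * (a : ℝ) / 2) (d * b / 2)
  rw [← sub_div, ← mul_sub, abs_div, abs_mul, Nat.abs_cast, abs_two] at h
  linarith

lemma prod_Icc_one_mul_prod_Icc_succ {M : Type*} [CommMonoid M] (f : ℕ → M) {n m : ℕ}
    (hnm : n ≤ m) : (∏ i ∈ Icc 1 n, f i) * ∏ i ∈ Icc (n + 1) m, f i = ∏ i ∈ Icc 1 m, f i := by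
  rw [← zero_add 1, Icc_add_one_left_eq_Ioc, Icc_add_one_left_eq_Ioc, zero_add,
    Icc_add_one_left_eq_Ioc]
  exact prod_Ioc_consecutive f (Nat.zero_le n) hnm

lemma Kc.monotone_abs_sub_mul_prod {p : ℕ → ℕ} (x y : Kc p) :
    Monotone fun m => |(x.1 m : ℝ) - y.1 m| * ∏ i ∈ Icc 1 m, (p i : ℝ) := by
  refine monotone_nat_of_le_succ fun m => ?_
  rw [prod_Icc_succ_top (by omega), mul_comm (∏ i ∈ Icc 1 m, (p i : ℝ)), ← mul_assoc]
  gcongr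
  rw [x.2 m, y.2 m, mul_comm]
  exact abs_tentI_sub_le _ _ _

lemma two_pow_le_prod_Icc {p : ℕ → ℕ} (hp : ∀ i, 1 ≤ i → 2 ≤ p i) (m : ℕ) :
    (2 : ℝ) ^ m ≤ ∏ i ∈ Icc 1 m, (p i : ℝ) := by
  calc (2 : ℝ) ^ m = ∏ _i ∈ Icc 1 m, (2 : ℝ) := by simp
    _ ≤ ∏ i ∈ Icc 1 m, (p i : ℝ) :=
      prod_le_prod (fun _ _ => zero_le_two) fun i hi => by exact_mod_cast hp i (mem_Icc.mp hi).1

lemma dK_le_of_abs_sub_mul_prod_le {p : ℕ → ℕ} (hp : ∀ i, 1 ≤ i → 2 ≤ p i) (x y : Kc p)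
    {C : ℝ} (hC : ∀ m, |(x.1 m : ℝ) - y.1 m| * ∏ i ∈ Icc 1 m, (p i : ℝ) ≤ C) :
    dK p x y ≤ C := by
  have hC0 : |(x.1 0 : ℝ) - y.1 0| ≤ C := by simpa using hC 0
  have hCnn : 0 ≤ C := (abs_nonneg _).trans hC0
  have hterm : ∀ i : ℕ, |(x.1 (i + 1) : ℝ) - y.1 (i + 1)| / ∏ j ∈ Icc 1 (i + 1), (p j : ℝ)
      ≤ C / 2 / 2 / 2 ^ i := by
    intro i
    set P := ∏ j ∈ Icc 1 (i + 1), (p j : ℝ)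
    have hP : 2 * 2 ^ i ≤ P := by simpa [pow_succ, mul_comm] using two_pow_le_prod_Icc hp (i + 1)
    have hP2 : 2 ≤ P := le_trans (by linarith [one_le_pow₀ (M₀ := ℝ) one_le_two (n := i)]) hP
    calc |(x.1 (i + 1) : ℝ) - y.1 (i + 1)| / P ≤ C / P / P := by
          gcongr; rw [le_div_iff₀ (by linarith)]; exact hC (i + 1)
      _ ≤ C / (2 * (2 * 2 ^ i)) := by rw [div_div]; gcongr
      _ = C / 2 / 2 / 2 ^ i := by ring
  have hsum := Summable.tsum_le_tsum hterm
    ((summable_geometric_two' (C / 2)).of_nonneg_of_le (fun i => by positivity) hterm)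
    (summable_geometric_two' (C / 2))
  rw [tsum_geometric_two'] at hsum
  unfold dK
  linarith

theorem induced_maps_close_of_close_general
    (p : ℕ → ℕ) (hp : ∀ i : ℕ, 1 ≤ i → (p i).Prime)
    (n : ℕ) (ε : ℝ) (g h : OPH) (F H : Kc p ≃ₜ Kc p)
    (hF : ∀ m : ℕ, n ≤ m → ∃ Gm : I → I,
      OplusProp g (∏ i ∈ Finset.Icc (n + 1) m, p i) Gm ∧
      ∀ x : Kc p, (F x).1 m = Gm (x.1 m))
    (hH : ∀ m : ℕ, n ≤ m → ∃ Hm : I → I,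
      OplusProp h (∏ i ∈ Finset.Icc (n + 1) m, p i) Hm ∧
      ∀ x : Kc p, (H x).1 m = Hm (x.1 m))
    (hgh : dist g h < ε / ∏ i ∈ Finset.Icc 1 n, (p i : ℝ)) :
    HDist p F H < ε := by
  set C := dist g h * ∏ i ∈ Icc 1 n, (p i : ℝ)
  have hp2 (i : ℕ) (hi : 1 ≤ i) : 2 ≤ p i := (hp i hi).two_le
  have hPn : 0 < ∏ i ∈ Icc 1 n, (p i : ℝ) :=
    prod_pos fun i hi => by exact_mod_cast (hp i (mem_Icc.mp hi).1).pos
  have hfar (x : Kc p) (m : ℕ) (hm : n ≤ m) :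
      |((F x).1 m : ℝ) - (H x).1 m| * ∏ i ∈ Icc 1 m, (p i : ℝ) ≤ C := by
    obtain ⟨G, hG, hFG⟩ := hF m hm
    obtain ⟨K, hK, hHK⟩ := hH m hm
    have hd : 1 ≤ ∏ i ∈ Icc (n + 1) m, p i :=
      one_le_prod' fun i hi => (hp i (by linarith [(mem_Icc.mp hi).1])).one_lt.le
    rw [hFG, hHK, ← prod_Icc_one_mul_prod_Icc_succ _ hm, mul_comm (∏ i ∈ Icc 1 n, _), ← mul_assoc]
    have hclose := hG.abs_sub_mul_le hd hK (x.1 m)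
    push_cast at hclose
    exact mul_le_mul_of_nonneg_right hclose hPn.le
  have hall (x : Kc p) (m : ℕ) :
      |((F x).1 m : ℝ) - (H x).1 m| * ∏ i ∈ Icc 1 m, (p i : ℝ) ≤ C := by
    rcases le_total n m with hm | hm
    · exact hfar x m hm
    · exact (Kc.monotone_abs_sub_mul_prod (F x) (H x) hm).trans (hfar x n le_rfl)
  calc HDist p F H ≤ C := Real.iSup_le (fun x => dK_le_of_abs_sub_mul_prod_le hp2 _ _ (hall x))
        (mul_nonneg dist_nonneg hPn.le)
    _ < ε := (lt_div_iff₀ hPn).mp hgh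

/-- Let `n ∈ ℕ`, `ε > 0`, `g, h ∈ Homeo₊[0,1]`, and let `F, H ∈ Homeo(K)` satisfy, for
every `m ≥ n`, `π_m ∘ F = ⊕^{p_{n+1}⋯p_m}(g) ∘ π_m` and `π_m ∘ H = ⊕^{p_{n+1}⋯p_m}(h) ∘ π_m`
(the maps `⊕^{d}(g)` being characterized by `OplusProp g d ·`; for `m = n` the empty product
is `1` and `⊕^1(g) = g`).  If `d_sup(g,h) < ε/(p₁⋯p_n)`, then
`d(F,H) = sup_{x ∈ K} d_K(F x, H x) < ε`. -/
theorem induced_maps_close_of_close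
    (p : ℕ → ℕ) (hp : ∀ i : ℕ, 1 ≤ i → (p i).Prime)
    (hp' : ∀ q : ℕ, q.Prime → {i : ℕ | 1 ≤ i ∧ p i = q}.Infinite)
    (n : ℕ) (ε : ℝ) (hε : 0 < ε) (g h : OPH) (F H : Kc p ≃ₜ Kc p)
    (hF : ∀ m : ℕ, n ≤ m → ∃ Gm : I → I,
      OplusProp g (∏ i ∈ Finset.Icc (n + 1) m, p i) Gm ∧
      ∀ x : Kc p, (F x).1 m = Gm (x.1 m))
    (hH : ∀ m : ℕ, n ≤ m → ∃ Hm : I → I,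
      OplusProp h (∏ i ∈ Finset.Icc (n + 1) m, p i) Hm ∧
      ∀ x : Kc p, (H x).1 m = Hm (x.1 m))
    (hgh : dist g h < ε / ∏ i ∈ Finset.Icc 1 n, (p i : ℝ)) :
    HDist p F H < ε :=
  induced_maps_close_of_close_general p hp n ε g h F H hF hH hgh
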